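/- Let κ1, κ2 > 0, and let C1 ≥ max(κ1, κ2) and 0 < C2 ≤ min(κ1, κ2). Then the compact set Γ = {(p1,p2) : 0 ≤ p1 ≤ 2C1, 0 ≤ p2 ≤ 2C1, p1 + p2 ≥ C2/2} is positively invariant for the system p1' = (κ1−κ2)p1 + κ1 p2 − p1², p2' = (κ2−κ1)p2 + κ2 p1 − p2², and in particular any solution starting in Γ exists for all forward times, remains bounded, and never reaches (0,0). -/
import Mathlib

open Filter Set Topology

/-- If `f` has positive derivative at `t` and `f t = a`, then `f > a` just to the right. -/
private lemma right_pos {f : ℝ → ℝ} {d a t : ℝ} (hf : HasDerivAt f d t) (hd : 0 < d)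
    (ha : f t = a) : ∀ᶠ s in 𝓝[>] t, a < f s := by
  have h := (hf.hasDerivWithinAt (s := Set.Ioi t))
  rw [hasDerivWithinAt_iff_tendsto_slope] at h
  have hset : Set.Ioi t \ {t} = Set.Ioi t := by
    ext x; simp only [Set.mem_diff, Set.mem_Ioi, Set.mem_singleton_iff]
    exact ⟨fun h => h.1, fun hx => ⟨hx, ne_of_gt hx⟩⟩
  rw [hset] at h
  have h2 : ∀ᶠ s in 𝓝[>] t, 0 < slope f t s := h.eventually (lt_mem_nhds hd)
  filter_upwards [h2, self_mem_nhdsWithin] with s hs hs'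
  rw [Set.mem_Ioi] at hs'
  have hst : 0 < s - t := sub_pos.mpr hs'
  rw [slope_def_field, div_pos_iff] at hs
  rcases hs with ⟨h1, _⟩ | ⟨_, h2⟩
  · linarith
  · linarith

private lemma right_neg {f : ℝ → ℝ} {d a t : ℝ} (hf : HasDerivAt f d t) (hd : d < 0)
    (ha : f t = a) : ∀ᶠ s in 𝓝[>] t, f s < a := by
  have h := right_pos (f := fun s => -f s) (d := -d) (a := -a) hf.neg (by linarith)
    (by simp [ha])
  filter_upwards [h] with s hs
  simpa using hs

theorem gamma_pos_invariant (κ1 κ2 C1 C2 : ℝ) (hκ1 : 0 < κ1) (hκ2 : 0 < κ2)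
    (hC1 : max κ1 κ2 ≤ C1) (hC2pos : 0 < C2) (hC2 : C2 ≤ min κ1 κ2)
    (p1 p2 : ℝ → ℝ) (s0 T : ℝ)
    (hp1 : ∀ s ∈ Set.Icc s0 T,
      HasDerivAt p1 ((κ1 - κ2) * p1 s + κ1 * p2 s - (p1 s)^2) s)
    (hp2 : ∀ s ∈ Set.Icc s0 T,
      HasDerivAt p2 ((κ2 - κ1) * p2 s + κ2 * p1 s - (p2 s)^2) s)
    (h0 : 0 ≤ p1 s0 ∧ p1 s0 ≤ 2*C1 ∧ 0 ≤ p2 s0 ∧ p2 s0 ≤ 2*C1 ∧ C2/2 ≤ p1 s0 + p2 s0) :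
    ∀ s ∈ Set.Icc s0 T,
      (0 ≤ p1 s ∧ p1 s ≤ 2*C1 ∧ 0 ≤ p2 s ∧ p2 s ≤ 2*C1 ∧ C2/2 ≤ p1 s + p2 s) ∧
      (p1 s, p2 s) ≠ (0, 0) := by
  have hκ1C1 : κ1 ≤ C1 := le_trans (le_max_left _ _) hC1
  have hκ2C1 : κ2 ≤ C1 := le_trans (le_max_right _ _) hC1
  have hC2κ1 : C2 ≤ κ1 := le_trans hC2 (min_le_left _ _)
  have hC2κ2 : C2 ≤ κ2 := le_trans hC2 (min_le_right _ _)
  have hC1pos : 0 < C1 := lt_of_lt_of_le hκ1 hκ1C1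
  set P : ℝ → Prop := fun s =>
    0 ≤ p1 s ∧ p1 s ≤ 2*C1 ∧ 0 ≤ p2 s ∧ p2 s ≤ 2*C1 ∧ C2/2 ≤ p1 s + p2 s with hPdef
  suffices hmain : ∀ s ∈ Set.Icc s0 T, P s by
    intro s hs
    obtain ⟨h1, h2, h3, h4, h5⟩ := hmain s hs
    refine ⟨⟨h1, h2, h3, h4, h5⟩, ?_⟩
    intro hc
    rw [Prod.mk.injEq] at hc
    rw [hc.1, hc.2] at h5
    linarith
  by_contra hcon
  push_neg at hcon
  obtain ⟨sb, hsb, hsbP⟩ := hcon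
  set V : Set ℝ := {s | s ∈ Set.Icc s0 T ∧ ¬ P s} with hVdef
  have hVne : V.Nonempty := ⟨sb, hsb, hsbP⟩
  have hVbdd : BddBelow V := ⟨s0, fun v hv => hv.1.1⟩
  set t : ℝ := sInf V with htdef
  have hts0 : s0 ≤ t := le_csInf hVne (fun v hv => hv.1.1)
  have htT : t ≤ T := by
    obtain ⟨v, hv⟩ := hVne
    exact le_trans (csInf_le hVbdd hv) hv.1.2
  have htmem : t ∈ Set.Icc s0 T := ⟨hts0, htT⟩
  -- P holds on [s0, t)
  have hbefore : ∀ u, s0 ≤ u → u < t → P u := by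
    intro u hu1 hu2
    by_contra hPu
    have : u ∈ V := ⟨⟨hu1, le_trans hu2.le htT⟩, hPu⟩
    exact absurd (csInf_le hVbdd this) (not_le.mpr hu2)
  -- P holds at t
  have hPt : P t := by
    by_contra hPt
    -- some strict violation at t; by continuity it holds near t
    have hc1 : ContinuousAt p1 t := (hp1 t htmem).continuousAt
    have hc2 : ContinuousAt p2 t := (hp2 t htmem).continuousAt
    have hnear : ∀ᶠ u in 𝓝 t, ¬ P u := by
      replace hPt : ¬ (0 ≤ p1 t ∧ p1 t ≤ 2*C1 ∧ 0 ≤ p2 t ∧ p2 t ≤ 2*C1 ∧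
          C2/2 ≤ p1 t + p2 t) := hPt
      push_neg at hPt
      by_cases h1 : 0 ≤ p1 t
      · by_cases h2 : p1 t ≤ 2*C1
        · by_cases h3 : 0 ≤ p2 t
          · by_cases h4 : p2 t ≤ 2*C1
            · have h5 : p1 t + p2 t < C2/2 := hPt h1 h2 h3 h4
              have : ∀ᶠ u in 𝓝 t, p1 u + p2 u < C2/2 :=
                (hc1.add hc2).eventually (gt_mem_nhds h5)
              filter_upwards [this] with u hu hPu
              exact absurd hPu.2.2.2.2 (not_le.mpr hu)
            · have h4' : 2*C1 < p2 t := lt_of_not_ge h4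
              have : ∀ᶠ u in 𝓝 t, 2*C1 < p2 u := hc2.eventually (lt_mem_nhds h4')
              filter_upwards [this] with u hu hPu
              exact absurd hPu.2.2.2.1 (not_le.mpr hu)
          · have h3' : p2 t < 0 := lt_of_not_ge h3
            have : ∀ᶠ u in 𝓝 t, p2 u < 0 := hc2.eventually (gt_mem_nhds h3')
            filter_upwards [this] with u hu hPu
            exact absurd hPu.2.2.1 (not_le.mpr hu)
        · have h2' : 2*C1 < p1 t := lt_of_not_ge h2
          have : ∀ᶠ u in 𝓝 t, 2*C1 < p1 u := hc1.eventually (lt_mem_nhds h2')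
          filter_upwards [this] with u hu hPu
          exact absurd hPu.2.1 (not_le.mpr hu)
      · have h1' : p1 t < 0 := lt_of_not_ge h1
        have : ∀ᶠ u in 𝓝 t, p1 u < 0 := hc1.eventually (gt_mem_nhds h1')
        filter_upwards [this] with u hu hPu
        exact absurd hPu.1 (not_le.mpr hu)
    -- pick u < t close to t with s0 ≤ u
    rcases eq_or_lt_of_le hts0 with heq | hlt
    · exact hPt (heq ▸ h0)
    · rw [Metric.eventually_nhds_iff] at hnear
      obtain ⟨δ, hδ, hδP⟩ := hnear
      set u : ℝ := max s0 (t - δ/2) with hudef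
      have hu1 : s0 ≤ u := le_max_left _ _
      have hu2 : u < t := max_lt hlt (by linarith)
      have hu3 : t - u ≤ δ/2 := by
        have : t - δ/2 ≤ u := le_max_right _ _
        linarith
      have hdist : dist u t < δ := by
        rw [Real.dist_eq, abs_of_nonpos (by linarith)]
        linarith
      exact hδP hdist (hbefore u hu1 hu2)
  obtain ⟨hPt1, hPt2, hPt3, hPt4, hPt5⟩ := hPt
  -- strict persistence to the right of t for each condition
  have hd1 := hp1 t htmem
  have hd2 := hp2 t htmem
  have e1 : ∀ᶠ s in 𝓝[>] t, 0 < p1 s := by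
    rcases eq_or_lt_of_le hPt1 with h | h
    · refine right_pos hd1 ?_ h.symm
      have : C2/2 ≤ p2 t := by linarith [hPt5, h.symm]
      nlinarith [mul_pos hκ1 (lt_of_lt_of_le (by linarith : (0:ℝ) < C2/2) this)]
    · exact (hd1.continuousAt.eventually (lt_mem_nhds h)).filter_mono nhdsWithin_le_nhds
  have e2 : ∀ᶠ s in 𝓝[>] t, p1 s < 2*C1 := by
    rcases eq_or_lt_of_le hPt2 with h | h
    · refine right_neg hd1 ?_ h
      nlinarith [mul_pos hC1pos hκ2]
    · exact (hd1.continuousAt.eventually (gt_mem_nhds h)).filter_mono nhdsWithin_le_nhds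
  have e3 : ∀ᶠ s in 𝓝[>] t, 0 < p2 s := by
    rcases eq_or_lt_of_le hPt3 with h | h
    · refine right_pos hd2 ?_ h.symm
      have : C2/2 ≤ p1 t := by linarith [hPt5, h.symm]
      nlinarith [mul_pos hκ2 (lt_of_lt_of_le (by linarith : (0:ℝ) < C2/2) this)]
    · exact (hd2.continuousAt.eventually (lt_mem_nhds h)).filter_mono nhdsWithin_le_nhds
  have e4 : ∀ᶠ s in 𝓝[>] t, p2 s < 2*C1 := by
    rcases eq_or_lt_of_le hPt4 with h | h
    · refine right_neg hd2 ?_ h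
      nlinarith [mul_pos hC1pos hκ1]
    · exact (hd2.continuousAt.eventually (gt_mem_nhds h)).filter_mono nhdsWithin_le_nhds
  have e5 : ∀ᶠ s in 𝓝[>] t, C2/2 < p1 s + p2 s := by
    rcases eq_or_lt_of_le hPt5 with h | h
    · refine right_pos (f := fun s => p1 s + p2 s) (hd1.add hd2) ?_ h.symm
      have hb1 : p1 t ≤ C2/2 := by linarith
      have hb2 : p2 t ≤ C2/2 := by linarith
      nlinarith [mul_nonneg hPt1 (by linarith : (0:ℝ) ≤ κ1 - p1 t),
        mul_nonneg hPt3 (by linarith : (0:ℝ) ≤ κ2 - p2 t),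
        mul_nonneg hPt1 (by linarith : (0:ℝ) ≤ C2/2),
        mul_nonneg hPt3 (by linarith : (0:ℝ) ≤ C2/2), sq_nonneg C2]
    · exact ((hd1.continuousAt.add hd2.continuousAt).eventually
        (lt_mem_nhds h)).filter_mono nhdsWithin_le_nhds
  have eP : ∀ᶠ s in 𝓝[>] t, P s := by
    filter_upwards [e1, e2, e3, e4, e5] with s h1 h2 h3 h4 h5
    exact ⟨h1.le, h2.le, h3.le, h4.le, h5.le⟩
  obtain ⟨u, hu, huP⟩ := mem_nhdsGT_iff_exists_Ioo_subset.mp eP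
  rw [Set.mem_Ioi] at hu
  obtain ⟨v, hv, hvu⟩ := exists_lt_of_csInf_lt hVne (show sInf V < u from hu)
  have hvt : t ≤ v := csInf_le hVbdd hv
  rcases eq_or_lt_of_le hvt with heq | hlt
  · exact hv.2 (heq ▸ ⟨hPt1, hPt2, hPt3, hPt4, hPt5⟩)
  · exact hv.2 (huP ⟨hlt, hvu⟩)
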